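/- arXiv:2106.01275 — 2 statements merged into one kernel-verified Lean document; each statement's English description precedes it below -/
import Mathlib

section
/- Let d ≥ 1 and let p > k ≥ 1. The chromatic number of the displacement graph G(d,p,k) is exactly ⌈2p/(p−k)⌉. -/
/-!
Projection to the first coordinate and the embedding `t ↦ t • e₁` are graph homomorphisms in both
directions between `G(d,p,k)` and the distance graph on `ℤ` with distances in `[a, b]`,
`a = p - k`, `b = p + k`, so the two graphs have the same colourings. Colouring `t` by
`⌊t / a⌋ mod n` is proper as soon as `a + b ≤ n a`. Conversely, if `2a ≤ b + 2`, a colour class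
meets a window of `a + b` consecutive integers in at most `a` points, whence `a + b ≤ n a`;
otherwise `⌈(a + b) / a⌉ = 3`, and two colours do not suffice because `s ~ s + a` and
`s ~ s + a + 1` force a 2-colouring to be constant.
-/

open Finset

/-- The L1 norm on the integer lattice `Fin d → ℤ`. -/
def norm1 {d : ℕ} (x : Fin d → ℤ) : ℤ := ∑ i, |x i|

/-- The first standard basis vector of `Fin d → ℤ`. -/
def e1 {d : ℕ} : Fin d → ℤ := fun i => if (i : ℕ) = 0 then 1 else 0

/-- `inN p k x y` means `y` belongs to the displaced distance-`k` neighborhood `N(x, p, k)`,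
i.e. `‖y − (x + p·e₁)‖₁ ≤ k` or `‖y − (x − p·e₁)‖₁ ≤ k`. -/
def inN {d : ℕ} (p k : ℕ) (x y : Fin d → ℤ) : Prop :=
  norm1 (y - (x + (p : ℤ) • e1)) ≤ (k : ℤ) ∨ norm1 (y - (x - (p : ℤ) • e1)) ≤ (k : ℤ)


lemma norm1_neg {d : ℕ} (x : Fin d → ℤ) : norm1 (-x) = norm1 x :=
  Finset.sum_congr rfl fun i _ => by simp

lemma inN_symm {d : ℕ} {p k : ℕ} {x y : Fin d → ℤ} (h : inN p k x y) : inN p k y x := by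
  rcases h with h | h
  · right
    have hv : x - (y - (p : ℤ) • e1) = -(y - (x + (p : ℤ) • e1)) := by abel
    rw [hv, norm1_neg]; exact h
  · left
    have hv : x - (y + (p : ℤ) • e1) = -(y - (x - (p : ℤ) • e1)) := by abel
    rw [hv, norm1_neg]; exact h

/-- The displacement graph `G(d, p, k)` on the lattice `Fin d → ℤ`:
distinct `x, y` are adjacent iff `y ∈ N(x, p, k)`. -/
def dispGraph (d p k : ℕ) : SimpleGraph (Fin d → ℤ) where
  Adj x y := x ≠ y ∧ inN p k x y
  symm := ⟨fun _ _ h => ⟨h.1.symm, inN_symm h.2⟩⟩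
  loopless := ⟨fun _ h => h.1 rfl⟩


namespace SimpleGraph

theorem chromaticNumber_eq_of_forall_colorable_iff {V : Type*} {G : SimpleGraph V} {N : ℕ}
    (h : ∀ n, G.Colorable n ↔ N ≤ n) : G.chromaticNumber = N :=
  le_antisymm (chromaticNumber_le_iff_colorable.2 ((h N).2 le_rfl))
    (le_chromaticNumber_iff_colorable.2 fun _ hm => by exact_mod_cast (h _).1 hm)

end SimpleGraph

theorem Int.ediv_lt_ediv_of_add_le {a s t : ℤ} (ha : 0 < a) (h : s + a ≤ t) : s / a < t / a :=
  calc s / a < s / a + 1 := lt_add_one _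
    _ = (s + 1 * a) / a := (Int.add_mul_ediv_right s 1 ha.ne').symm
    _ ≤ t / a := Int.ediv_le_ediv ha (by rwa [one_mul])

def intervalDistGraph (a b : ℕ) : SimpleGraph ℤ where
  Adj s t := s ≠ t ∧ a ≤ (t - s).natAbs ∧ (t - s).natAbs ≤ b
  symm := ⟨fun _ _ h => by omega⟩
  loopless := ⟨fun _ h => h.1 rfl⟩

namespace intervalDistGraph

variable {a b n : ℕ}

theorem adj_iff {s t : ℤ} :
    (intervalDistGraph a b).Adj s t ↔ s ≠ t ∧ a ≤ (t - s).natAbs ∧ (t - s).natAbs ≤ b :=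
  Iff.rfl

theorem colorable_of_add_le_mul (ha : 0 < a) (h : a + b ≤ n * a) :
    (intervalDistGraph a b).Colorable n := by
  have : NeZero n := ⟨by rintro rfl; omega⟩
  have ha' : (0 : ℤ) < a := by exact_mod_cast ha
  have hsep : ∀ s t : ℤ, (intervalDistGraph a b).Adj s t → s < t →
      ((s / a : ℤ) : ZMod n) ≠ ((t / a : ℤ) : ZMod n) := by
    intro s t hst hlt heq
    rw [adj_iff] at hst
    have hpos := Int.ediv_lt_ediv_of_add_le ha' (s := s) (t := t) (by omega)
    have hlt_n : t / a < s / a + n := by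
      rw [← Int.add_mul_ediv_right s n ha'.ne']
      have hb : t - s ≤ b := by omega
      have hn : (a : ℤ) + b ≤ n * a := by exact_mod_cast h
      exact Int.ediv_lt_ediv_of_add_le ha' (by linarith)
    have hdvd := (ZMod.intCast_eq_intCast_iff_dvd_sub _ _ n).1 heq
    have := Int.le_of_dvd (by omega) hdvd
    omega
  refine (SimpleGraph.Coloring.mk (fun t : ℤ => ((t / a : ℤ) : ZMod n))
    fun {s t} hst heq => ?_).colorable.mono (by simp)
  rcases lt_or_gt_of_ne hst.1 with h | h
  · exact hsep s t hst h heq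
  · exact hsep t s hst.symm h heq.symm

theorem not_colorable_two (ha : 0 < a) (hab : a < b) : ¬ (intervalDistGraph a b).Colorable 2 := by
  rintro ⟨C⟩
  have hadj : ∀ s : ℤ, ∀ c : ℕ, a ≤ c → c ≤ b → (intervalDistGraph a b).Adj s (s + c) :=
    fun s c h1 h2 => by rw [adj_iff]; omega
  have fin_two : ∀ x y z : Fin 2, x ≠ y → x ≠ z → y = z := by decide
  have hstep : ∀ s, C s = C (s + 1) := fun s => by
    have h1 := C.valid (hadj (s - a) a le_rfl hab.le)
    have h2 := C.valid (hadj (s - a) (a + 1) (by omega) hab)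
    convert fin_two _ _ _ h1 h2 using 2 <;> push_cast <;> ring
  have hconst : ∀ m : ℕ, C m = C 0 := fun m => by
    induction m with
    | zero => rfl
    | succ m ih => rw [Nat.cast_succ, ← hstep, ih]
  exact C.valid (hadj 0 a le_rfl hab.le) (by simpa using (hconst a).symm)

theorem card_le_of_isIndepSet (ha : 0 < a) (hab : 2 * a ≤ b + 2) {c : ℤ} {T : Finset ℤ}
    (hT : T ⊆ Finset.Ico c (c + a + b)) (hind : (intervalDistGraph a b).IsIndepSet T) :
    T.card ≤ a := by
  have hfar : ∀ s ∈ T, ∀ t ∈ T, s < t → a ≤ t - s → b < t - s := by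
    intro s hs t ht hst ha
    have : ¬ (intervalDistGraph a b).Adj s t := hind hs ht hst.ne
    rw [adj_iff] at this
    omega
  rcases T.eq_empty_or_nonempty with rfl | hne
  · simp
  obtain ⟨s, hsT, hs⟩ : ∃ s ∈ T, ∀ t ∈ T, s ≤ t :=
    ⟨T.min' hne, T.min'_mem hne, fun t ht => T.min'_le t ht⟩
  have hsc : c ≤ s := (Finset.mem_Ico.1 (hT hsT)).1
  by_cases hU : ∃ u ∈ T, s + a ≤ u
  · have hne' : (T.filter (s + a ≤ ·)).Nonempty := by
      obtain ⟨u, huT, hsu⟩ := hU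
      exact ⟨u, Finset.mem_filter.2 ⟨huT, hsu⟩⟩
    obtain ⟨u, huU, hu⟩ : ∃ u ∈ T.filter (s + a ≤ ·), ∀ t ∈ T.filter (s + a ≤ ·), u ≤ t :=
      ⟨_, (T.filter _).min'_mem hne', fun t ht => (T.filter _).min'_le t ht⟩
    obtain ⟨huT, hsu⟩ := Finset.mem_filter.1 huU
    have hub := hfar s hsT u huT (by omega) (by omega)
    -- Elements of `T` below `u` lie in `[s, s + a)`, so their distance to `u` is `≥ a`, hence `> b`.
    have hsub : T ⊆ Finset.Ico s (u - b) ∪ Finset.Ico u (c + a + b) := by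
      intro t ht
      have htc := Finset.mem_Ico.1 (hT ht)
      rw [Finset.mem_union, Finset.mem_Ico, Finset.mem_Ico]
      by_cases htu : u ≤ t
      · right; omega
      · left
        have hta : t < s + a := by
          by_contra! h
          exact htu (hu t (Finset.mem_filter.2 ⟨ht, h⟩))
        have hst := hs t ht
        have := hfar t ht u huT (by omega) (by omega)
        omega
    have := (Finset.card_le_card hsub).trans (Finset.card_union_le _ _)
    rw [Int.card_Ico, Int.card_Ico] at this
    have := Finset.mem_Ico.1 (hT huT)
    omega
  · have hsub : T ⊆ Finset.Ico s (s + a) := fun t ht => by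
      refine Finset.mem_Ico.2 ⟨hs t ht, ?_⟩
      by_contra! h
      exact hU ⟨t, ht, h⟩
    simpa using Finset.card_le_card hsub

theorem add_le_mul_of_colorable (ha : 0 < a) (hab : 2 * a ≤ b + 2)
    (h : (intervalDistGraph a b).Colorable n) : a + b ≤ n * a := by
  obtain ⟨C⟩ := h
  have hfib : ∀ i ∈ (Finset.univ : Finset (Fin n)),
      #{t ∈ Finset.Ico (0 : ℤ) (a + b) | C t = i} ≤ a := fun i _ =>
    card_le_of_isIndepSet ha hab (c := 0) (by simp)
      ((C.isIndepSet_colorClass i).mono fun t ht => (Finset.mem_filter.1 ht).2)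
  have := Finset.card_le_mul_card_image_of_maps_to (fun t _ => Finset.mem_univ (C t)) a hfib
  rw [Int.card_Ico, Finset.card_univ, Fintype.card_fin] at this
  rw [mul_comm]
  omega

theorem colorable_iff (ha : 0 < a) (hab : a < b) :
    (intervalDistGraph a b).Colorable n ↔ a + b ≤ n * a := by
  refine ⟨fun h => ?_, colorable_of_add_le_mul ha⟩
  by_cases hab' : 2 * a ≤ b + 2
  · exact add_le_mul_of_colorable ha hab' h
  · have h3 : 3 ≤ n := by
      by_contra! hn
      exact not_colorable_two ha hab (h.mono (by omega))
    nlinarith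

end intervalDistGraph

section Lattice

variable {d p k : ℕ}

theorem abs_apply_le_norm1 (z : Fin d → ℤ) (i : Fin d) : |z i| ≤ norm1 z :=
  Finset.single_le_sum (f := fun i => |z i|) (fun _ _ => abs_nonneg _) (Finset.mem_univ i)

theorem e1_apply_zero (hd : 0 < d) : (e1 : Fin d → ℤ) ⟨0, hd⟩ = 1 := by
  simp [e1]

theorem norm1_smul_e1 (hd : 0 < d) (c : ℤ) : norm1 (c • e1 : Fin d → ℤ) = |c| := by
  rw [norm1, Finset.sum_eq_single ⟨0, hd⟩ (fun i _ hi => ?_) (by simp)]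
  · simp [e1_apply_zero hd]
  · have : (i : ℕ) ≠ 0 := fun h => hi (Fin.ext h)
    simp [e1, this]

theorem inN_smul_e1_iff (hd : 0 < d) (s t : ℤ) :
    inN p k (s • e1 : Fin d → ℤ) (t • e1) ↔ |t - (s + p)| ≤ k ∨ |t - (s - p)| ≤ k := by
  rw [inN, ← add_smul, ← sub_smul, ← sub_smul, ← sub_smul, norm1_smul_e1 hd, norm1_smul_e1 hd]

theorem inN_apply_zero (hd : 0 < d) {x y : Fin d → ℤ} (h : inN p k x y) :
    |y ⟨0, hd⟩ - (x ⟨0, hd⟩ + p)| ≤ k ∨ |y ⟨0, hd⟩ - (x ⟨0, hd⟩ - p)| ≤ k := by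
  have h0 := abs_apply_le_norm1 (d := d) (i := ⟨0, hd⟩)
  simpa [e1_apply_zero hd] using h.imp (h0 _).trans (h0 _).trans

namespace dispGraph

def homOfIntervalDistGraph (hd : 0 < d) :
    intervalDistGraph (p - k) (p + k) →g dispGraph d p k where
  toFun t := t • e1
  map_rel' {s t} h := by
    rw [intervalDistGraph.adj_iff] at h
    refine ⟨fun hst => h.1 ?_, ?_⟩
    · simpa [e1_apply_zero hd] using congrFun hst ⟨0, hd⟩
    · rw [inN_smul_e1_iff hd, abs_le, abs_le]
      omega

def homToIntervalDistGraph (hd : 0 < d) (hpk : k < p) :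
    dispGraph d p k →g intervalDistGraph (p - k) (p + k) where
  toFun x := x ⟨0, hd⟩
  map_rel' {x y} h := by
    have := inN_apply_zero hd h.2
    rw [abs_le, abs_le] at this
    rw [intervalDistGraph.adj_iff]
    omega

theorem colorable_iff (hd : 0 < d) (hpk : k < p) {n : ℕ} :
    (dispGraph d p k).Colorable n ↔ (intervalDistGraph (p - k) (p + k)).Colorable n :=
  ⟨.of_hom (homOfIntervalDistGraph hd), .of_hom (homToIntervalDistGraph hd hpk)⟩

end dispGraph

end Lattice

theorem Int.toNat_ceil_div_le_iff {K : Type*} [Field K] [LinearOrder K] [IsStrictOrderedRing K]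
    [FloorRing K] {x y n : ℕ} (hy : 0 < y) : ⌈(x : K) / y⌉.toNat ≤ n ↔ x ≤ n * y := by
  rw [Int.toNat_le, Int.ceil_le, div_le_iff₀ (by positivity)]
  exact_mod_cast Iff.rfl

/-- For `d ≥ 1` and `p > k ≥ 1`, the chromatic number of the displacement graph `G(d, p, k)`
is exactly `⌈2p / (p − k)⌉`. -/
theorem stmt4 (d : ℕ) (hd : 0 < d) (p k : ℕ) (hk : 1 ≤ k) (hpk : k < p) :
    (dispGraph d p k).chromaticNumber =
      ((⌈(2 * (p : ℚ)) / ((p : ℚ) - (k : ℚ))⌉.toNat : ℕ) : ℕ∞) := by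
  have hratio : (2 * (p : ℚ)) / ((p : ℚ) - (k : ℚ)) =
      ((p - k + (p + k) : ℕ) : ℚ) / ((p - k : ℕ) : ℚ) := by
    push_cast [Nat.cast_sub hpk.le]
    ring
  refine SimpleGraph.chromaticNumber_eq_of_forall_colorable_iff fun n => ?_
  rw [dispGraph.colorable_iff hd hpk, intervalDistGraph.colorable_iff (by omega) (by omega), hratio,
    Int.toNat_ceil_div_le_iff (by omega)]
end

section
/- Let d ≥ 2 and let p, k be natural numbers with 1 ≤ p < k and k + p odd, and set α = (k+p−1)/2 and β = (k−p−1)/2. Let C' = C(d,α,β) ∪ T ∪ S. Then for all x, y ∈ C' one has x ∈ N(y,p,k); that is, ‖x − (y + p·e₁)‖₁ ≤ k or ‖x − (y − p·e₁)‖₁ ≤ k. In particular C' is a clique of the displacement graph G(d,p,k). -/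
open Finset

/-- `∑_{i=2}^d |x_i|` : the sum of absolute values of all but the first coordinate. -/
def tailSum {d : ℕ} (x : Fin d → ℤ) : ℤ :=
  ∑ i ∈ Finset.univ.filter (fun i : Fin d => (i : ℕ) ≠ 0), |x i|


/-- The `j`-th coordinate (0-indexed) of a lattice point, or `0` if out of range. -/
def coord {d : ℕ} (x : Fin d → ℤ) (j : ℕ) : ℤ := if h : j < d then x ⟨j, h⟩ else 0


/-- The set `C(d, α, β) = { x : ‖x‖₁ ≤ α and ∑_{i=2}^d |x_i| ≤ β }`. -/
def Cset (d : ℕ) (α β : ℤ) : Set (Fin d → ℤ) := {x | norm1 x ≤ α ∧ tailSum x ≤ β}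


/-- The set `T = { x : −(p−1) ≤ x₁ ≤ p, 1 ≤ x₂ ≤ β, and ∑_{i=2}^d |x_i| = β+1 }`. -/
def Tset (d : ℕ) (p β : ℤ) : Set (Fin d → ℤ) :=
  {x | -(p - 1) ≤ coord x 0 ∧ coord x 0 ≤ p ∧ 1 ≤ coord x 1 ∧ coord x 1 ≤ β ∧
       tailSum x = β + 1}


/-- The set `S = { x : p+1 ≤ x₁ ≤ α+1, |x₂| ≤ β, and ‖x‖₁ = α+1 }`. -/
def Sset (d : ℕ) (p α β : ℤ) : Set (Fin d → ℤ) :=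
  {x | p + 1 ≤ coord x 0 ∧ coord x 0 ≤ α + 1 ∧ |coord x 1| ≤ β ∧ norm1 x = α + 1}

/-!
Write `c = x₁ - y₁` and `t = ∑_{i ≥ 2} |xᵢ - yᵢ|`. Then `x ∈ N(y, p, k)` iff `||c| - p| + t ≤ k`,
i.e. iff `‖x - y‖₁ ≤ k + p = 2α + 1` and `t - |c| ≤ k - p = 2β + 1`. Both follow from bounds on
the profiles `(z₁, z₂, ∑_{i ≥ 3} |zᵢ|)` of the two points, checked case by case according to which
of `C`, `T`, `S` they lie in: the unit by which points of `T` and `S` exceed the bounds of `C` is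
recovered from the sign constraints on their first two coordinates.
-/

def tailSum₂ {d : ℕ} (z : Fin d → ℤ) : ℤ :=
  ∑ i ∈ univ.filter (fun i : Fin d => (i : ℕ) ≠ 0 ∧ (i : ℕ) ≠ 1), |z i|

section Lattice

variable {d : ℕ}

lemma coord_sub (x y : Fin d → ℤ) (j : ℕ) : coord (x - y) j = coord x j - coord y j := by
  unfold coord; split <;> simp

lemma norm1_eq_abs_coord_zero_add_tailSum (hd : 0 < d) (z : Fin d → ℤ) :
    norm1 z = |coord z 0| + tailSum z := by
  have h0 : univ.filter (fun i : Fin d => (i : ℕ) = 0) = {⟨0, hd⟩} := by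
    ext i; simp [Fin.ext_iff]
  rw [norm1, tailSum, ← sum_filter_add_sum_filter_not univ (fun i : Fin d => (i : ℕ) = 0), h0,
    sum_singleton, coord, dif_pos hd]

lemma tailSum_eq_abs_coord_one_add_tailSum₂ (hd : 1 < d) (z : Fin d → ℤ) :
    tailSum z = |coord z 1| + tailSum₂ z := by
  have h1 : univ.filter (fun i : Fin d => (i : ℕ) ≠ 0 ∧ (i : ℕ) = 1) = {⟨1, hd⟩} := by
    ext i; simp [Fin.ext_iff]; omega
  rw [tailSum, tailSum₂, ← sum_filter_add_sum_filter_not _ (fun i : Fin d => (i : ℕ) = 1),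
    filter_filter, filter_filter, h1, sum_singleton, coord, dif_pos hd]

lemma tailSum_sub_le (hd : 1 < d) (x y : Fin d → ℤ) :
    tailSum (x - y) ≤ |coord x 1 - coord y 1| + tailSum₂ x + tailSum₂ y := by
  have h₂ : tailSum₂ (x - y) ≤ tailSum₂ x + tailSum₂ y := by
    rw [tailSum₂, tailSum₂, tailSum₂, ← sum_add_distrib]
    exact sum_le_sum fun i _ => abs_sub (x i) (y i)
  rw [tailSum_eq_abs_coord_one_add_tailSum₂ hd, coord_sub]
  linarith

lemma tailSum_sub_smul_e1 (z : Fin d → ℤ) (c : ℤ) : tailSum (z - c • e1) = tailSum z := by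
  refine sum_congr rfl fun i hi => ?_
  simp [e1, (mem_filter.mp hi).2]

lemma norm1_sub_smul_e1 (hd : 0 < d) (z : Fin d → ℤ) (c : ℤ) :
    norm1 (z - c • e1) = |coord z 0 - c| + tailSum z := by
  rw [norm1_eq_abs_coord_zero_add_tailSum hd, tailSum_sub_smul_e1]
  simp [coord, dif_pos hd, e1]

end Lattice

lemma abs_sub_add_le_or_abs_add_add_le {c t p k : ℤ} (h₁ : |c| + t ≤ k + p)
    (h₂ : t - |c| ≤ k - p) : |c - p| + t ≤ k ∨ |c + p| + t ≤ k := by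
  rcases abs_cases c with ⟨hc, -⟩ | ⟨hc, -⟩
  · left; rcases abs_cases (c - p) with ⟨h, -⟩ | ⟨h, -⟩ <;> omega
  · right; rcases abs_cases (c + p) with ⟨h, -⟩ | ⟨h, -⟩ <;> omega

lemma inN_of_norm1_sub_le {d : ℕ} (hd : 0 < d) {p k : ℕ} {x y : Fin d → ℤ}
    (h₁ : norm1 (x - y) ≤ k + p) (h₂ : tailSum (x - y) - |coord (x - y) 0| ≤ k - p) :
    inN p k y x := by
  rw [norm1_eq_abs_coord_zero_add_tailSum hd] at h₁
  have hplus : x - (y + (p : ℤ) • e1) = x - y - (p : ℤ) • e1 := by abel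
  have hminus : x - (y - (p : ℤ) • e1) = x - y - (-(p : ℤ)) • e1 := by rw [neg_smul]; abel
  rw [inN, hplus, hminus, norm1_sub_smul_e1 hd, norm1_sub_smul_e1 hd, sub_neg_eq_add]
  exact abs_sub_add_le_or_abs_add_add_le h₁ (by linarith)

/-- The conditions defining `C(d, α, β)`, `T` and `S`, read on
`(a, u, s) = (z₁, z₂, ∑_{i ≥ 3} |zᵢ|)`. -/
def CliqueProfile (p α β a u s : ℤ) : Prop :=
  (|a| + |u| + s ≤ α ∧ |u| + s ≤ β) ∨
  (-(p - 1) ≤ a ∧ a ≤ p ∧ 1 ≤ u ∧ u ≤ β ∧ |u| + s = β + 1) ∨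
  (p + 1 ≤ a ∧ a ≤ α + 1 ∧ |u| ≤ β ∧ |a| + |u| + s = α + 1)

lemma cliqueProfile_of_mem {d : ℕ} (hd : 1 < d) {p α β : ℤ} {z : Fin d → ℤ}
    (hz : z ∈ Cset d α β ∪ Tset d p β ∪ Sset d p α β) :
    CliqueProfile p α β (coord z 0) (coord z 1) (tailSum₂ z) := by
  have hnorm := norm1_eq_abs_coord_zero_add_tailSum (by omega) z
  have htail := tailSum_eq_abs_coord_one_add_tailSum₂ hd z
  rcases hz with (⟨h₁, h₂⟩ | ⟨h₁, h₂, h₃, h₄, h₅⟩) | ⟨h₁, h₂, h₃, h₄⟩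
  · exact Or.inl ⟨by linarith, by linarith⟩
  · exact Or.inr (Or.inl ⟨h₁, h₂, h₃, h₄, by linarith⟩)
  · exact Or.inr (Or.inr ⟨h₁, h₂, h₃, by linarith⟩)

lemma CliqueProfile.dist_bounds {p α β a u s b v t : ℤ} (hαβ : α = β + p) (hp : 0 ≤ p)
    (hx : CliqueProfile p α β a u s) (hy : CliqueProfile p α β b v t) :
    |a - b| + (|u - v| + s + t) ≤ 2 * α + 1 ∧ |u - v| + s + t - |a - b| ≤ 2 * β + 1 := by
  unfold CliqueProfile at hx hy
  simp only [abs_eq_max_neg, max_def] at *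
  constructor <;> split_ifs <;> omega

theorem stmt10_general (d : ℕ) (hd : 2 ≤ d) (p k : ℕ)
    (α β : ℤ) (hα : 2 * α = (k : ℤ) + (p : ℤ) - 1) (hβ : 2 * β = (k : ℤ) - (p : ℤ) - 1)
    (x y : Fin d → ℤ)
    (hx : x ∈ Cset d α β ∪ Tset d (p : ℤ) β ∪ Sset d (p : ℤ) α β)
    (hy : y ∈ Cset d α β ∪ Tset d (p : ℤ) β ∪ Sset d (p : ℤ) α β) :
    inN p k y x := by
  obtain ⟨hnorm, htail⟩ := (cliqueProfile_of_mem hd hx).dist_bounds (by omega)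
    (Nat.cast_nonneg p) (cliqueProfile_of_mem hd hy)
  have hsub := tailSum_sub_le hd x y
  apply inN_of_norm1_sub_le (by omega)
  · rw [norm1_eq_abs_coord_zero_add_tailSum (by omega), coord_sub]
    linarith
  · rw [coord_sub]
    linarith

/-- If `d ≥ 2`, `1 ≤ p < k`, `k + p` is odd, `α = (k+p−1)/2` and `β = (k−p−1)/2`, then any
two points of `C' = C(d, α, β) ∪ T ∪ S` are displaced distance-`k` neighbors: for all
`x, y ∈ C'`, `x ∈ N(y, p, k)`; so `C'` is a clique of the displacement graph `G(d, p, k)`. -/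
theorem stmt10 (d : ℕ) (hd : 2 ≤ d) (p k : ℕ) (hp : 1 ≤ p) (hpk : p < k)
    (hodd : Odd (k + p))
    (α β : ℤ) (hα : 2 * α = (k : ℤ) + (p : ℤ) - 1) (hβ : 2 * β = (k : ℤ) - (p : ℤ) - 1)
    (x y : Fin d → ℤ)
    (hx : x ∈ Cset d α β ∪ Tset d (p : ℤ) β ∪ Sset d (p : ℤ) α β)
    (hy : y ∈ Cset d α β ∪ Tset d (p : ℤ) β ∪ Sset d (p : ℤ) α β) :
    inN p k y x :=
  stmt10_general d hd p k α β hα hβ x y hx hy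
end
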